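/- Let h ∈ L¹((−1,1), M_r) and α ∈ (0,1]. Define F^h(x,t) = (1/2) · [[h((x−t)/2), h((x+t)/2)], [h(−(x+t)/2), h(−(x−t)/2)]] as a 2r×2r block matrix kernel. Then the equation f(x) + ∫₀^α h(x−t) f(t) dt = 0, x ∈ (0,α), has a nonzero solution f ∈ L²((0,α), ℂ^r) if and only if the equation g(x) + ∫₀^α F^h(x,t) g(t) dt = 0, x ∈ (0,α), has a nonzero solution g ∈ L²((0,α), ℂ^{2r}). -/

import Mathlib

set_option maxHeartbeats 1000000

open MeasureTheory

noncomputable section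

abbrev En (r : ℕ) := EuclideanSpace ℂ (Fin r)

open Set

lemma aff_map_volume {a : ℝ} (ha : a ≠ 0) (b : ℝ) :
    Measure.map (fun x => a * x + b) (volume : Measure ℝ) = ENNReal.ofReal |a⁻¹| • volume := by
  have : (fun x : ℝ => a * x + b) = (fun x => x + b) ∘ (fun x => a * x) := rfl
  rw [this, ← Measure.map_map (measurable_add_const b) (measurable_const_mul a),
    Real.map_volume_mul_left ha, Measure.map_smul, map_add_right_eq_self]

lemma aff_qmp {a : ℝ} (ha : a ≠ 0) (b : ℝ) :
    Measure.QuasiMeasurePreserving (fun x => a * x + b) (volume : Measure ℝ) volume := by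
  refine ⟨(measurable_const_mul a).add_const b, ?_⟩
  rw [aff_map_volume ha b]
  refine Measure.AbsolutelyContinuous.mk fun s hs h0 => ?_
  simp [Measure.smul_apply, h0]

lemma memLp_comp_aff {E : Type*} [NormedAddCommGroup E] {f : ℝ → E} {p : ENNReal} {s t : Set ℝ}
    (hs : MeasurableSet s) (hf : MemLp f p (volume.restrict s)) {a : ℝ} (ha : a ≠ 0) (b : ℝ)
    (hmaps : ∀ x ∈ t, a * x + b ∈ s) :
    MemLp (fun x => f (a * x + b)) p (volume.restrict t) := by
  set φ : ℝ → ℝ := fun x => a * x + b with hφ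
  have hφm : Measurable φ := (measurable_const_mul a).add_const b
  have h1 : Measure.map φ (volume.restrict t) ≤ Measure.map φ (volume.restrict (φ ⁻¹' s)) :=
    Measure.map_mono (Measure.restrict_mono (fun x hx => hmaps x hx) le_rfl) hφm
  have h2 : Measure.map φ (volume.restrict (φ ⁻¹' s)) = ENNReal.ofReal |a⁻¹| • volume.restrict s := by
    rw [← Measure.restrict_map hφm hs, aff_map_volume ha b, Measure.restrict_smul]
  have h3 : MemLp f p (Measure.map φ (volume.restrict t)) := by
    refine MemLp.mono_measure (h1.trans_eq h2) ?_
    exact hf.smul_measure (by simp)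
  exact h3.comp_of_map hφm.aemeasurable

lemma integrableOn_comp_aff {E : Type*} [NormedAddCommGroup E] {f : ℝ → E} {s t : Set ℝ}
    (hs : MeasurableSet s) (hf : IntegrableOn f s volume) {a : ℝ} (ha : a ≠ 0) (b : ℝ)
    (hmaps : ∀ x ∈ t, a * x + b ∈ s) :
    IntegrableOn (fun x => f (a * x + b)) t volume := by
  rw [IntegrableOn, ← memLp_one_iff_integrable]
  exact memLp_comp_aff hs (memLp_one_iff_integrable.2 hf) ha b hmaps

lemma ae_aff_transfer {P : ℝ → Prop} {s t : Set ℝ} (hs : MeasurableSet s) (ht : MeasurableSet t)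
    (hP : ∀ᵐ x ∂volume.restrict s, P x) {a : ℝ} (ha : a ≠ 0) (b : ℝ)
    (hmaps : ∀ x ∈ t, a * x + b ∈ s) :
    ∀ᵐ x ∂volume.restrict t, P (a * x + b) := by
  have h1 := (ae_restrict_iff' hs).1 hP
  have h2 := (aff_qmp ha b).ae h1
  filter_upwards [ae_restrict_of_ae h2, ae_restrict_mem ht] with x hx hxt
  exact hx (hmaps x hxt)

lemma integral_Ioo_eq_intervalIntegral {E : Type*} [NormedAddCommGroup E] [NormedSpace ℝ E]
    (F : ℝ → E) {u v : ℝ} (huv : u ≤ v) :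
    ∫ t in Ioo u v, F t = ∫ t in u..v, F t := by
  rw [intervalIntegral.integral_of_le huv, integral_Ioc_eq_integral_Ioo]

lemma half_combine {E : Type*} [NormedAddCommGroup E] [NormedSpace ℝ E] {α : ℝ} (hα : 0 < α)
    {F : ℝ → E} (hF : IntegrableOn F (Ioo (0:ℝ) α) volume) :
    ∫ t in Ioo (0:ℝ) α, (F ((1/2)*t + α/2) + F (-(1/2)*t + α/2)) =
      (2:ℝ) • ∫ t in Ioo (0:ℝ) α, F t := by
  have h0α : (0:ℝ) ≤ α := hα.le
  have hm1 : ∀ x ∈ Ioo (0:ℝ) α, (1/2)*x + α/2 ∈ Ioo (0:ℝ) α := by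
    intro x hx; constructor <;> nlinarith [hx.1, hx.2]
  have hm2 : ∀ x ∈ Ioo (0:ℝ) α, -(1/2)*x + α/2 ∈ Ioo (0:ℝ) α := by
    intro x hx; constructor <;> nlinarith [hx.1, hx.2]
  have hint1 : IntegrableOn (fun t => F ((1/2)*t + α/2)) (Ioo (0:ℝ) α) volume :=
    integrableOn_comp_aff measurableSet_Ioo hF (by norm_num) _ hm1
  have hint2 : IntegrableOn (fun t => F (-(1/2)*t + α/2)) (Ioo (0:ℝ) α) volume :=
    integrableOn_comp_aff measurableSet_Ioo hF (by norm_num) _ hm2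
  rw [integral_add hint1 hint2]
  have e1 : ∫ t in Ioo (0:ℝ) α, F ((1/2)*t + α/2) = (2:ℝ) • ∫ t in (α/2)..α, F t := by
    rw [integral_Ioo_eq_intervalIntegral _ h0α,
      intervalIntegral.integral_comp_mul_add F (by norm_num : (1/2:ℝ) ≠ 0) (α/2),
      show (1/2:ℝ)*0 + α/2 = α/2 by ring, show (1/2:ℝ)*α + α/2 = α by ring,
      show ((1/2:ℝ))⁻¹ = 2 by norm_num]
  have e2 : ∫ t in Ioo (0:ℝ) α, F (-(1/2)*t + α/2) = (2:ℝ) • ∫ t in (0:ℝ)..(α/2), F t := by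
    rw [integral_Ioo_eq_intervalIntegral _ h0α,
      intervalIntegral.integral_comp_mul_add F (by norm_num : (-(1/2):ℝ) ≠ 0) (α/2),
      show (-(1/2):ℝ)*0 + α/2 = α/2 by ring, show (-(1/2):ℝ)*α + α/2 = 0 by ring,
      intervalIntegral.integral_symm 0 (α/2)]
    rw [smul_neg, ← neg_smul]
    norm_num
  have hii1 : IntervalIntegrable F volume 0 (α/2) := by
    rw [intervalIntegrable_iff_integrableOn_Ioo_of_le (by linarith)]
    exact hF.mono_set (fun z hz => ⟨hz.1, by linarith [hz.2]⟩)
  have hii2 : IntervalIntegrable F volume (α/2) α := by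
    rw [intervalIntegrable_iff_integrableOn_Ioo_of_le (by linarith)]
    exact hF.mono_set (fun z hz => ⟨by linarith [hz.1], hz.2⟩)
  rw [e1, e2, ← smul_add, add_comm, intervalIntegral.integral_add_adjacent_intervals hii1 hii2,
    integral_Ioo_eq_intervalIntegral _ h0α]
lemma lintegral_aff_le {G : ℝ → ENNReal} (hG : Measurable G) {a : ℝ} (ha : a ≠ 0) (b : ℝ)
    {s S : Set ℝ} (hS : MeasurableSet S) (hmaps : ∀ x ∈ s, a * x + b ∈ S) :
    ∫⁻ x in s, G (a * x + b) ∂volume ≤ ENNReal.ofReal |a⁻¹| * ∫⁻ u in S, G u ∂volume := by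
  set φ : ℝ → ℝ := fun x => a * x + b with hφ
  have hφm : Measurable φ := (measurable_const_mul a).add_const b
  have h1 : ∫⁻ x in s, G (φ x) ∂volume ≤ ∫⁻ x in φ ⁻¹' S, G (φ x) ∂volume :=
    lintegral_mono' (Measure.restrict_mono (fun x hx => hmaps x hx) le_rfl) le_rfl
  have h2 : ∫⁻ x in φ ⁻¹' S, G (φ x) ∂volume = ∫⁻ u, G u ∂(Measure.map φ (volume.restrict (φ ⁻¹' S))) :=
    (lintegral_map hG hφm).symm
  have h3 : Measure.map φ (volume.restrict (φ ⁻¹' S)) = ENNReal.ofReal |a⁻¹| • volume.restrict S := by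
    rw [← Measure.restrict_map hφm hS, aff_map_volume ha b, Measure.restrict_smul]
  calc ∫⁻ x in s, G (φ x) ∂volume ≤ ∫⁻ x in φ ⁻¹' S, G (φ x) ∂volume := h1
    _ = ∫⁻ u, G u ∂(Measure.map φ (volume.restrict (φ ⁻¹' S))) := h2
    _ = ENNReal.ofReal |a⁻¹| * ∫⁻ u in S, G u ∂volume := by
        rw [h3, lintegral_smul_measure, smul_eq_mul]

lemma ae_integrableOn_kernel {E : Type*} [NormedAddCommGroup E] [NormedSpace ℂ E]
    {h : ℝ → (E →L[ℂ] E)} (hh : IntegrableOn h (Ioo (-1:ℝ) 1) volume)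
    {α : ℝ}
    {k : ℝ → E} (hk : Integrable k (volume.restrict (Ioo (0:ℝ) α)))
    {a b : ℝ} (ha : a ≠ 0) (hb : b ≠ 0)
    (hmaps : ∀ x ∈ Ioo (0:ℝ) α, ∀ t ∈ Ioo (0:ℝ) α, a * x + b * t ∈ Ioo (-1:ℝ) 1) :
    ∀ᵐ x ∂volume.restrict (Ioo (0:ℝ) α),
      IntegrableOn (fun t => h (a * x + b * t) (k t)) (Ioo (0:ℝ) α) volume := by
  set I : Set ℝ := Ioo (0:ℝ) α with hI
  have hIm : MeasurableSet I := measurableSet_Ioo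
  have hI1 : MeasurableSet (Ioo (-1:ℝ) 1) := measurableSet_Ioo
  have h's := hh.1
  set h' : ℝ → (E →L[ℂ] E) := h's.mk h with hh'def
  have h'sm : StronglyMeasurable h' := h's.stronglyMeasurable_mk
  have heq : ∀ᵐ u ∂(volume : Measure ℝ), u ∈ Ioo (-1:ℝ) 1 → h u = h' u :=
    (ae_restrict_iff' hI1).1 h's.ae_eq_mk
  set k' : ℝ → E := hk.1.mk k with hk'def
  have k'sm : StronglyMeasurable k' := hk.1.stronglyMeasurable_mk
  have keq : ∀ᵐ t ∂volume.restrict I, k t = k' t := hk.1.ae_eq_mk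
  have hCh : ∫⁻ u in Ioo (-1:ℝ) 1, ‖h' u‖₊ ∂volume < ⊤ := by
    have : ∫⁻ u in Ioo (-1:ℝ) 1, ‖h' u‖₊ ∂volume = ∫⁻ u in Ioo (-1:ℝ) 1, ‖h u‖₊ ∂volume := by
      refine lintegral_congr_ae ?_
      filter_upwards [h's.ae_eq_mk] with u hu
      rw [hu]
    rw [this]
    exact hh.2
  have hCk : ∫⁻ t in I, ‖k' t‖₊ ∂volume < ⊤ := by
    have : ∫⁻ t in I, ‖k' t‖₊ ∂volume = ∫⁻ t in I, ‖k t‖₊ ∂volume := by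
      refine lintegral_congr_ae ?_
      filter_upwards [keq] with t ht
      rw [ht]
    rw [this]
    exact hk.2
  have hmeas : ∀ x : ℝ, StronglyMeasurable (fun t => h' (a * x + b * t) (k' t)) := by
    intro x
    exact isBoundedBilinearMap_apply.continuous.comp_stronglyMeasurable
      ((h'sm.comp_measurable ((measurable_const_mul b).const_add (a * x))).prodMk k'sm)
  set Φ : ℝ → ℝ → ENNReal := fun x t => (‖h' (a * x + b * t)‖₊ : ENNReal) * ‖k' t‖₊ with hΦ
  have hΦm : Measurable (Function.uncurry Φ) := by
    have m1 : Measurable fun p : ℝ × ℝ => a * p.1 + b * p.2 :=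
      (measurable_fst.const_mul a).add (measurable_snd.const_mul b)
    exact (h'sm.enorm.comp m1).mul (k'sm.enorm.comp measurable_snd)
  have key : ∫⁻ x in I, ∫⁻ t in I, Φ x t ∂volume ∂volume < ⊤ := by
    have hswap : ∫⁻ x in I, ∫⁻ t in I, Φ x t ∂volume ∂volume
        = ∫⁻ t in I, ∫⁻ x in I, Φ x t ∂volume ∂volume :=
      lintegral_lintegral_swap hΦm.aemeasurable
    rw [hswap]
    set C : ENNReal := ENNReal.ofReal |a⁻¹| * ∫⁻ u in Ioo (-1:ℝ) 1, ‖h' u‖₊ ∂volume with hC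
    have hbound : ∫⁻ t in I, ∫⁻ x in I, Φ x t ∂volume ∂volume
        ≤ ∫⁻ t in I, ‖k' t‖₊ * C ∂volume := by
      refine setLIntegral_mono' hIm fun t ht => ?_
      have : ∫⁻ x in I, Φ x t ∂volume = (∫⁻ x in I, ‖h' (a * x + b * t)‖₊ ∂volume) * ‖k' t‖₊ := by
        rw [← lintegral_mul_const]
        exact (h'sm.enorm.comp ((measurable_const_mul a).add_const (b * t)))
      rw [this, mul_comm]
      refine mul_le_mul_right ?_ _
      exact lintegral_aff_le h'sm.enorm ha (b * t) hI1 (fun x hx => hmaps x hx t ht)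
    refine lt_of_le_of_lt hbound ?_
    rw [lintegral_mul_const (f := fun t => (‖k' t‖₊ : ENNReal)) _ k'sm.enorm]
    exact ENNReal.mul_lt_top hCk (ENNReal.mul_lt_top (by simp) hCh)
  have hxfin : ∀ᵐ x ∂volume.restrict I, ∫⁻ t in I, Φ x t ∂volume < ⊤ := by
    refine ae_lt_top ?_ key.ne
    exact hΦm.lintegral_prod_right
  have haeeq : ∀ᵐ x ∂volume.restrict I,
      (fun t => h (a * x + b * t) (k t)) =ᵐ[volume.restrict I]
        (fun t => h' (a * x + b * t) (k' t)) := by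
    filter_upwards [ae_restrict_mem hIm] with x hx
    have h2 : ∀ᵐ t ∂(volume : Measure ℝ),
        (b * t + a * x ∈ Ioo (-1:ℝ) 1 → h (b * t + a * x) = h' (b * t + a * x)) :=
      (aff_qmp hb (a * x)).ae heq
    filter_upwards [ae_restrict_of_ae h2, keq, ae_restrict_mem hIm] with t h2t hkt htI
    have harg : a * x + b * t = b * t + a * x := by ring
    rw [harg, h2t (by rw [← harg]; exact hmaps x hx t htI), hkt]
  filter_upwards [hxfin, haeeq] with x hfin heqx
  refine Integrable.congr ⟨(hmeas x).aestronglyMeasurable, ?_⟩ heqx.symm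
  refine lt_of_le_of_lt (lintegral_mono fun t => ?_) hfin
  calc (‖h' (a * x + b * t) (k' t)‖₊ : ENNReal)
      ≤ (‖h' (a * x + b * t)‖₊ * ‖k' t‖₊ : NNReal) :=
        ENNReal.coe_le_coe.2 ((h' (a * x + b * t)).le_opNNNorm (k' t))
    _ = Φ x t := by push_cast; rfl

lemma forward (r : ℕ) (h : ℝ → (En r →L[ℂ] En r))
    (hh : IntegrableOn h (Set.Ioo (-1 : ℝ) 1) volume)
    (α : ℝ) (hα : 0 < α) (hα1 : α ≤ 1)
    (f : ℝ → En r)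
    (hf2 : MemLp f 2 (volume.restrict (Set.Ioo (0 : ℝ) α)))
    (hfne : ¬ f =ᵐ[volume.restrict (Set.Ioo (0 : ℝ) α)] 0)
    (hfeq : ∀ᵐ x ∂volume.restrict (Set.Ioo (0 : ℝ) α),
          f x + ∫ t in Set.Ioo (0 : ℝ) α, h (x - t) (f t) = 0) :
    (∃ g₁ g₂ : ℝ → En r,
        MemLp g₁ 2 (volume.restrict (Set.Ioo (0 : ℝ) α)) ∧
        MemLp g₂ 2 (volume.restrict (Set.Ioo (0 : ℝ) α)) ∧
        ¬ (g₁ =ᵐ[volume.restrict (Set.Ioo (0 : ℝ) α)] 0 ∧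
           g₂ =ᵐ[volume.restrict (Set.Ioo (0 : ℝ) α)] 0) ∧
        ∀ᵐ x ∂volume.restrict (Set.Ioo (0 : ℝ) α),
          g₁ x + (1 / 2 : ℝ) • (∫ t in Set.Ioo (0 : ℝ) α,
              (h ((x - t) / 2) (g₁ t) + h ((x + t) / 2) (g₂ t))) = 0 ∧
          g₂ x + (1 / 2 : ℝ) • (∫ t in Set.Ioo (0 : ℝ) α,
              (h (-(x + t) / 2) (g₁ t) + h (-(x - t) / 2) (g₂ t))) = 0) := by
  have hIm : MeasurableSet (Set.Ioo (0:ℝ) α) := measurableSet_Ioo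
  haveI : IsFiniteMeasure (volume.restrict (Set.Ioo (0:ℝ) α)) :=
    ⟨by rw [Measure.restrict_apply_univ]; simp [Real.volume_Ioo]⟩
  have hfint : Integrable f (volume.restrict (Set.Ioo (0:ℝ) α)) := hf2.integrable (by norm_num)
  have hm1 : ∀ x ∈ Ioo (0:ℝ) α, (1/2)*x + α/2 ∈ Ioo (0:ℝ) α := by
    intro x hx; constructor <;> nlinarith [hx.1, hx.2]
  have hm2 : ∀ x ∈ Ioo (0:ℝ) α, -(1/2)*x + α/2 ∈ Ioo (0:ℝ) α := by
    intro x hx; constructor <;> nlinarith [hx.1, hx.2]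
  refine ⟨fun t => f ((1/2)*t + α/2), fun t => f (-(1/2)*t + α/2),
    memLp_comp_aff hIm hf2 (by norm_num) _ hm1,
    memLp_comp_aff hIm hf2 (by norm_num) _ hm2, ?_, ?_⟩
  · rintro ⟨hz1, hz2⟩
    apply hfne
    have hmapsB : ∀ x ∈ Ioo (α/2) α, 2*x + -α ∈ Ioo (0:ℝ) α := by
      intro x hx; constructor <;> nlinarith [hx.1, hx.2]
    have hmapsA : ∀ x ∈ Ioo (0:ℝ) (α/2), -2*x + α ∈ Ioo (0:ℝ) α := by
      intro x hx; constructor <;> nlinarith [hx.1, hx.2]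
    have hB := ae_aff_transfer hIm measurableSet_Ioo hz1 (two_ne_zero) (-α) hmapsB
    have hA := ae_aff_transfer hIm measurableSet_Ioo hz2 (by norm_num : (-2:ℝ) ≠ 0) α hmapsA
    have hB' : ∀ᵐ x ∂(volume : Measure ℝ), x ∈ Ioo (α/2) α → f x = 0 := by
      have := (ae_restrict_iff' measurableSet_Ioo).1 hB
      filter_upwards [this] with x hx hxB
      have := hx hxB
      rwa [show (1/2:ℝ)*(2*x + -α) + α/2 = x by ring] at this
    have hA' : ∀ᵐ x ∂(volume : Measure ℝ), x ∈ Ioo (0:ℝ) (α/2) → f x = 0 := by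
      have := (ae_restrict_iff' measurableSet_Ioo).1 hA
      filter_upwards [this] with x hx hxA
      have := hx hxA
      rwa [show -(1/2:ℝ)*(-2*x + α) + α/2 = x by ring] at this
    have hmid : ∀ᵐ x : ℝ ∂volume, x ≠ α/2 := by
      rw [ae_iff]
      have : {x : ℝ | ¬ x ≠ α/2} = {α/2} := by ext z; simp [not_not]
      rw [this]
      exact Real.volume_singleton
    refine (ae_restrict_iff' hIm).2 ?_
    filter_upwards [hA', hB', hmid] with x h1 h2 h3 hxI
    rcases lt_trichotomy x (α/2) with hlt | heq | hgt
    · exact h1 ⟨hxI.1, hlt⟩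
    · exact absurd heq h3
    · exact h2 ⟨hgt, hxI.2⟩
  · -- the equation
    have hmapsK : ∀ x ∈ Ioo (0:ℝ) α, ∀ t ∈ Ioo (0:ℝ) α, 1*x + (-1)*t ∈ Ioo (-1:ℝ) 1 := by
      intro x hx t ht; constructor <;> nlinarith [hx.1, hx.2, ht.1, ht.2]
    have hker := ae_integrableOn_kernel hh hfint one_ne_zero (by norm_num : (-1:ℝ) ≠ 0) hmapsK
    have hcomb : ∀ᵐ y ∂volume.restrict (Set.Ioo (0:ℝ) α),
        (f y + ∫ t in Set.Ioo (0:ℝ) α, h (y - t) (f t) = 0) ∧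
          IntegrableOn (fun t => h (y - t) (f t)) (Set.Ioo (0:ℝ) α) volume := by
      filter_upwards [hfeq, hker] with y h1 h2
      refine ⟨h1, ?_⟩
      have : (fun t => h (1*y + (-1)*t) (f t)) = fun t => h (y - t) (f t) := by
        funext t; rw [show 1*y + (-1)*t = y - t by ring]
      rwa [this] at h2
    have trans1 := ae_aff_transfer hIm hIm hcomb (by norm_num : (1/2:ℝ) ≠ 0) (α/2) hm1
    have trans2 := ae_aff_transfer hIm hIm hcomb (by norm_num : (-(1/2):ℝ) ≠ 0) (α/2) hm2
    filter_upwards [trans1, trans2] with x h1 h2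
    obtain ⟨hEq1, hInt1⟩ := h1
    obtain ⟨hEq2, hInt2⟩ := h2
    constructor
    · set y : ℝ := 1/2*x + α/2 with hy
      have hIeq : ∫ t in Ioo (0:ℝ) α,
          (h ((x - t)/2) (f ((1/2)*t + α/2)) + h ((x + t)/2) (f (-(1/2)*t + α/2)))
          = (2:ℝ) • ∫ t in Ioo (0:ℝ) α, h (y - t) (f t) := by
        have hrw : (fun t => h ((x - t)/2) (f ((1/2)*t + α/2)) + h ((x + t)/2) (f (-(1/2)*t + α/2)))
            = fun t => (fun u => h (y - u) (f u)) ((1/2)*t + α/2)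
              + (fun u => h (y - u) (f u)) (-(1/2)*t + α/2) := by
          funext t
          simp only
          rw [show y - ((1/2)*t + α/2) = (x - t)/2 by rw [hy]; ring,
            show y - (-(1/2)*t + α/2) = (x + t)/2 by rw [hy]; ring]
        rw [hrw]
        exact half_combine hα hInt1
      rw [hIeq, smul_smul]
      norm_num
      exact hEq1
    · set y : ℝ := -(1/2)*x + α/2 with hy
      have hIeq : ∫ t in Ioo (0:ℝ) α,
          (h (-(x + t)/2) (f ((1/2)*t + α/2)) + h (-(x - t)/2) (f (-(1/2)*t + α/2)))
          = (2:ℝ) • ∫ t in Ioo (0:ℝ) α, h (y - t) (f t) := by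
        have hrw : (fun t => h (-(x + t)/2) (f ((1/2)*t + α/2)) + h (-(x - t)/2) (f (-(1/2)*t + α/2)))
            = fun t => (fun u => h (y - u) (f u)) ((1/2)*t + α/2)
              + (fun u => h (y - u) (f u)) (-(1/2)*t + α/2) := by
          funext t
          simp only
          rw [show y - ((1/2)*t + α/2) = -(x + t)/2 by rw [hy]; ring,
            show y - (-(1/2)*t + α/2) = -(x - t)/2 by rw [hy]; ring]
        rw [hrw]
        exact half_combine hα hInt2
      rw [hIeq, smul_smul]
      norm_num
      exact hEq2

lemma backward (r : ℕ) (h : ℝ → (En r →L[ℂ] En r))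
    (hh : IntegrableOn h (Set.Ioo (-1 : ℝ) 1) volume)
    (α : ℝ) (hα : 0 < α) (hα1 : α ≤ 1)
    (g₁ g₂ : ℝ → En r)
    (hg1 : MemLp g₁ 2 (volume.restrict (Set.Ioo (0 : ℝ) α)))
    (hg2 : MemLp g₂ 2 (volume.restrict (Set.Ioo (0 : ℝ) α)))
    (hgne : ¬ (g₁ =ᵐ[volume.restrict (Set.Ioo (0 : ℝ) α)] 0 ∧
           g₂ =ᵐ[volume.restrict (Set.Ioo (0 : ℝ) α)] 0))
    (hgeq : ∀ᵐ x ∂volume.restrict (Set.Ioo (0 : ℝ) α),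
          g₁ x + (1 / 2 : ℝ) • (∫ t in Set.Ioo (0 : ℝ) α,
              (h ((x - t) / 2) (g₁ t) + h ((x + t) / 2) (g₂ t))) = 0 ∧
          g₂ x + (1 / 2 : ℝ) • (∫ t in Set.Ioo (0 : ℝ) α,
              (h (-(x + t) / 2) (g₁ t) + h (-(x - t) / 2) (g₂ t))) = 0) :
    (∃ f : ℝ → En r,
        MemLp f 2 (volume.restrict (Set.Ioo (0 : ℝ) α)) ∧
        ¬ f =ᵐ[volume.restrict (Set.Ioo (0 : ℝ) α)] 0 ∧
        ∀ᵐ x ∂volume.restrict (Set.Ioo (0 : ℝ) α),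
          f x + ∫ t in Set.Ioo (0 : ℝ) α, h (x - t) (f t) = 0) := by
  have hIm : MeasurableSet (Set.Ioo (0:ℝ) α) := measurableSet_Ioo
  have hAm : MeasurableSet (Set.Ioo (0:ℝ) (α/2)) := measurableSet_Ioo
  have hBm : MeasurableSet (Set.Ioo (α/2) α) := measurableSet_Ioo
  have hAs : Set.Ioo (0:ℝ) (α/2) ⊆ Set.Ioo (0:ℝ) α := fun z hz => ⟨hz.1, by linarith [hz.2]⟩
  have hBs : Set.Ioo (α/2) α ⊆ Set.Ioo (0:ℝ) α := fun z hz => ⟨by linarith [hz.1], hz.2⟩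
  haveI : IsFiniteMeasure (volume.restrict (Set.Ioo (0:ℝ) α)) :=
    ⟨by rw [Measure.restrict_apply_univ]; simp [Real.volume_Ioo]⟩
  have hm1 : ∀ x ∈ Ioo (0:ℝ) α, (1/2)*x + α/2 ∈ Ioo (0:ℝ) α := by
    intro x hx; constructor <;> nlinarith [hx.1, hx.2]
  have hm2 : ∀ x ∈ Ioo (0:ℝ) α, -(1/2)*x + α/2 ∈ Ioo (0:ℝ) α := by
    intro x hx; constructor <;> nlinarith [hx.1, hx.2]
  have hmapsB : ∀ x ∈ Ioo (α/2) α, 2*x + -α ∈ Ioo (0:ℝ) α := by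
    intro x hx; constructor <;> nlinarith [hx.1, hx.2]
  have hmapsA : ∀ x ∈ Ioo (0:ℝ) (α/2), -2*x + α ∈ Ioo (0:ℝ) α := by
    intro x hx; constructor <;> nlinarith [hx.1, hx.2]
  have hmid : ∀ᵐ x : ℝ ∂volume, x ≠ α/2 := by
    rw [ae_iff]
    have : {x : ℝ | ¬ x ≠ α/2} = {α/2} := by ext z; simp [not_not]
    rw [this]
    exact Real.volume_singleton
  set f : ℝ → En r := fun x => (Set.Ioo (0:ℝ) (α/2)).indicator (fun z => g₂ (-2*z + α)) x
      + (Set.Ioo (α/2) α).indicator (fun z => g₁ (2*z + -α)) x with hfdef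
  have hfA : ∀ x ∈ Set.Ioo (0:ℝ) (α/2), f x = g₂ (-2*x + α) := by
    intro x hx
    have hnB : x ∉ Set.Ioo (α/2) α := fun hB => by have := hx.2; have := hB.1; linarith
    rw [hfdef]
    simp only
    rw [Set.indicator_of_mem hx, Set.indicator_of_notMem hnB, add_zero]
  have hfB : ∀ x ∈ Set.Ioo (α/2) α, f x = g₁ (2*x + -α) := by
    intro x hx
    have hnA : x ∉ Set.Ioo (0:ℝ) (α/2) := fun hA => by have := hx.1; have := hA.2; linarith
    rw [hfdef]
    simp only
    rw [Set.indicator_of_mem hx, Set.indicator_of_notMem hnA, zero_add]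
  refine ⟨f, ?_, ?_, ?_⟩
  · -- Memℒp
    have hres : ∀ s : Set ℝ, MeasurableSet s → s ⊆ Set.Ioo (0:ℝ) α →
        (volume.restrict (Set.Ioo (0:ℝ) α)).restrict s = volume.restrict s := by
      intro s hs hsub
      rw [Measure.restrict_restrict hs, Set.inter_eq_self_of_subset_left hsub]
    have memA : MemLp ((Set.Ioo (0:ℝ) (α/2)).indicator (fun z => g₂ (-2*z + α))) 2
        (volume.restrict (Set.Ioo (0:ℝ) α)) := by
      rw [memLp_indicator_iff_restrict hAm, hres _ hAm hAs]
      exact memLp_comp_aff hIm hg2 (by norm_num : (-2:ℝ) ≠ 0) α hmapsA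
    have memB : MemLp ((Set.Ioo (α/2) α).indicator (fun z => g₁ (2*z + -α))) 2
        (volume.restrict (Set.Ioo (0:ℝ) α)) := by
      rw [memLp_indicator_iff_restrict hBm, hres _ hBm hBs]
      exact memLp_comp_aff hIm hg1 (two_ne_zero) (-α) hmapsB
    exact memA.add memB
  · -- nonzero
    intro hf0
    apply hgne
    constructor
    · have h1 := ae_aff_transfer hIm hIm hf0 (by norm_num : (1/2:ℝ) ≠ 0) (α/2) hm1
      filter_upwards [h1, ae_restrict_mem hIm] with t ht htI
      have hmem : (1/2)*t + α/2 ∈ Set.Ioo (α/2) α := by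
        constructor <;> nlinarith [htI.1, htI.2]
      have h2 := hfB _ hmem
      rw [show 2*((1/2)*t + α/2) + -α = t by ring] at h2
      have h3 : f ((1/2)*t + α/2) = 0 := by simpa using ht
      rw [← h2]
      exact h3
    · have h1 := ae_aff_transfer hIm hIm hf0 (by norm_num : (-(1/2):ℝ) ≠ 0) (α/2) hm2
      filter_upwards [h1, ae_restrict_mem hIm] with t ht htI
      have hmem : -(1/2)*t + α/2 ∈ Set.Ioo (0:ℝ) (α/2) := by
        constructor <;> nlinarith [htI.1, htI.2]
      have h2 := hfA _ hmem
      rw [show -2*(-(1/2)*t + α/2) + α = t by ring] at h2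
      have h3 : f (-(1/2)*t + α/2) = 0 := by simpa using ht
      rw [← h2]
      exact h3
  · -- the equation
    have g₁int : Integrable g₁ (volume.restrict (Set.Ioo (0:ℝ) α)) := hg1.integrable (by norm_num)
    have g₂int : Integrable g₂ (volume.restrict (Set.Ioo (0:ℝ) α)) := hg2.integrable (by norm_num)
    have hK1m : ∀ x ∈ Ioo (0:ℝ) α, ∀ t ∈ Ioo (0:ℝ) α, (1/2)*x + (-(1/2))*t ∈ Ioo (-1:ℝ) 1 := by
      intro x hx t ht; constructor <;> nlinarith [hx.1, hx.2, ht.1, ht.2]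
    have hK2m : ∀ x ∈ Ioo (0:ℝ) α, ∀ t ∈ Ioo (0:ℝ) α, (1/2)*x + (1/2)*t ∈ Ioo (-1:ℝ) 1 := by
      intro x hx t ht; constructor <;> nlinarith [hx.1, hx.2, ht.1, ht.2]
    have hK3m : ∀ x ∈ Ioo (0:ℝ) α, ∀ t ∈ Ioo (0:ℝ) α, (-(1/2))*x + (-(1/2))*t ∈ Ioo (-1:ℝ) 1 := by
      intro x hx t ht; constructor <;> nlinarith [hx.1, hx.2, ht.1, ht.2]
    have hK4m : ∀ x ∈ Ioo (0:ℝ) α, ∀ t ∈ Ioo (0:ℝ) α, (-(1/2))*x + (1/2)*t ∈ Ioo (-1:ℝ) 1 := by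
      intro x hx t ht; constructor <;> nlinarith [hx.1, hx.2, ht.1, ht.2]
    have K1 := ae_integrableOn_kernel hh g₁int (by norm_num : (1/2:ℝ) ≠ 0) (by norm_num : (-(1/2):ℝ) ≠ 0) hK1m
    have K2 := ae_integrableOn_kernel hh g₂int (by norm_num : (1/2:ℝ) ≠ 0) (by norm_num : (1/2:ℝ) ≠ 0) hK2m
    have K3 := ae_integrableOn_kernel hh g₁int (by norm_num : (-(1/2):ℝ) ≠ 0) (by norm_num : (-(1/2):ℝ) ≠ 0) hK3m
    have K4 := ae_integrableOn_kernel hh g₂int (by norm_num : (-(1/2):ℝ) ≠ 0) (by norm_num : (1/2:ℝ) ≠ 0) hK4m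
    have hQ : ∀ᵐ y ∂volume.restrict (Set.Ioo (0:ℝ) α),
        (g₁ y + (1/2 : ℝ) • (∫ t in Set.Ioo (0:ℝ) α,
            (h ((y - t)/2) (g₁ t) + h ((y + t)/2) (g₂ t))) = 0) ∧
        (g₂ y + (1/2 : ℝ) • (∫ t in Set.Ioo (0:ℝ) α,
            (h (-(y + t)/2) (g₁ t) + h (-(y - t)/2) (g₂ t))) = 0) ∧
        IntegrableOn (fun t => h ((y - t)/2) (g₁ t)) (Set.Ioo (0:ℝ) α) volume ∧
        IntegrableOn (fun t => h ((y + t)/2) (g₂ t)) (Set.Ioo (0:ℝ) α) volume ∧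
        IntegrableOn (fun t => h (-(y + t)/2) (g₁ t)) (Set.Ioo (0:ℝ) α) volume ∧
        IntegrableOn (fun t => h (-(y - t)/2) (g₂ t)) (Set.Ioo (0:ℝ) α) volume := by
      filter_upwards [hgeq, K1, K2, K3, K4] with y e1 k1 k2 k3 k4
      refine ⟨e1.1, e1.2, ?_, ?_, ?_, ?_⟩
      · have : (fun t => h ((1/2)*y + (-(1/2))*t) (g₁ t)) = fun t => h ((y - t)/2) (g₁ t) := by
          funext t; rw [show (1/2)*y + (-(1/2))*t = (y - t)/2 by ring]
        rwa [this] at k1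
      · have : (fun t => h ((1/2)*y + (1/2)*t) (g₂ t)) = fun t => h ((y + t)/2) (g₂ t) := by
          funext t; rw [show (1/2)*y + (1/2)*t = (y + t)/2 by ring]
        rwa [this] at k2
      · have : (fun t => h ((-(1/2))*y + (-(1/2))*t) (g₁ t)) = fun t => h (-(y + t)/2) (g₁ t) := by
          funext t; rw [show (-(1/2))*y + (-(1/2))*t = -(y + t)/2 by ring]
        rwa [this] at k3
      · have : (fun t => h ((-(1/2))*y + (1/2)*t) (g₂ t)) = fun t => h (-(y - t)/2) (g₂ t) := by
          funext t; rw [show (-(1/2))*y + (1/2)*t = -(y - t)/2 by ring]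
        rwa [this] at k4
    have hQB := ae_aff_transfer hIm hBm hQ (two_ne_zero) (-α) hmapsB
    have hQA := ae_aff_transfer hIm hAm hQ (by norm_num : (-2:ℝ) ≠ 0) α hmapsA
    have hQB' := ae_restrict_of_ae (μ := volume) (s := Set.Ioo (0:ℝ) α)
      ((ae_restrict_iff' hBm).1 hQB)
    have hQA' := ae_restrict_of_ae (μ := volume) (s := Set.Ioo (0:ℝ) α)
      ((ae_restrict_iff' hAm).1 hQA)
    filter_upwards [hQB', hQA', ae_restrict_of_ae hmid, ae_restrict_mem hIm]
      with x hQBx hQAx hxne hxI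
    have hpt : ∀ F : ℝ → En r, IntegrableOn F ({α/2} : Set ℝ) volume := by
      intro F
      have : volume.restrict ({α/2} : Set ℝ) = 0 :=
        Measure.restrict_eq_zero.2 Real.volume_singleton
      rw [IntegrableOn, this]
      exact integrable_zero_measure
    by_cases hcut : x < α/2
    · -- x ∈ A
      have hxA : x ∈ Set.Ioo (0:ℝ) (α/2) := ⟨hxI.1, hcut⟩
      obtain ⟨-, hQ2, -, -, Int5, Int6⟩ := hQAx hxA
      set y : ℝ := -2*x + α with hy
      have hFB : IntegrableOn (fun t => h (x - t) (f t)) (Set.Ioo (α/2) α) volume := by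
        have c1 : IntegrableOn (fun t => (fun u => h (-(y + u)/2) (g₁ u)) (2*t + -α))
            (Set.Ioo (α/2) α) volume :=
          integrableOn_comp_aff hIm Int5 two_ne_zero (-α) hmapsB
        refine c1.congr_fun ?_ hBm
        intro t htB
        show h (-(y + (2*t + -α))/2) (g₁ (2*t + -α)) = h (x - t) (f t)
        rw [hfB t htB, show (-(y + (2*t + -α))/2 : ℝ) = x - t by rw [hy]; ring]
      have hFA : IntegrableOn (fun t => h (x - t) (f t)) (Set.Ioo (0:ℝ) (α/2)) volume := by
        have c1 : IntegrableOn (fun t => (fun u => h (-(y - u)/2) (g₂ u)) (-2*t + α))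
            (Set.Ioo (0:ℝ) (α/2)) volume :=
          integrableOn_comp_aff hIm Int6 (by norm_num : (-2:ℝ) ≠ 0) α hmapsA
        refine c1.congr_fun ?_ hAm
        intro t htA
        show h (-(y - (-2*t + α))/2) (g₂ (-2*t + α)) = h (x - t) (f t)
        rw [hfA t htA, show (-(y - (-2*t + α))/2 : ℝ) = x - t by rw [hy]; ring]
      have hF : IntegrableOn (fun t => h (x - t) (f t)) (Set.Ioo (0:ℝ) α) volume := by
        refine ((hFA.union hFB).union (hpt _)).mono_set ?_
        intro z hz
        rcases lt_trichotomy z (α/2) with h1 | h1 | h1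
        · exact Or.inl (Or.inl ⟨hz.1, h1⟩)
        · exact Or.inr (by simp [h1])
        · exact Or.inl (Or.inr ⟨h1, hz.2⟩)
      have hIeq : ∫ t in Set.Ioo (0:ℝ) α, (h (-(y + t)/2) (g₁ t) + h (-(y - t)/2) (g₂ t))
          = (2:ℝ) • ∫ t in Set.Ioo (0:ℝ) α, h (x - t) (f t) := by
        rw [setIntegral_congr_fun hIm (g := fun t =>
            (fun u => h (x - u) (f u)) ((1/2)*t + α/2) + (fun u => h (x - u) (f u)) (-(1/2)*t + α/2)) ?_]
        · exact half_combine hα hF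
        · intro t htI
          show h (-(y + t)/2) (g₁ t) + h (-(y - t)/2) (g₂ t)
              = h (x - ((1/2)*t + α/2)) (f ((1/2)*t + α/2)) + h (x - (-(1/2)*t + α/2)) (f (-(1/2)*t + α/2))
          have hmB : (1/2)*t + α/2 ∈ Set.Ioo (α/2) α := by
            constructor <;> nlinarith [htI.1, htI.2]
          have hmA : -(1/2)*t + α/2 ∈ Set.Ioo (0:ℝ) (α/2) := by
            constructor <;> nlinarith [htI.1, htI.2]
          rw [hfB _ hmB, hfA _ hmA,
            show 2*((1/2)*t + α/2) + -α = t by ring,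
            show -2*(-(1/2)*t + α/2) + α = t by ring,
            show x - ((1/2)*t + α/2) = -(y + t)/2 by rw [hy]; ring,
            show x - (-(1/2)*t + α/2) = -(y - t)/2 by rw [hy]; ring]
      have hfx : f x = g₂ y := by rw [hfA x hxA]
      rw [hfx]
      have h2 : ∫ t in Set.Ioo (0:ℝ) α, h (x - t) (f t)
          = (1/2 : ℝ) • ∫ t in Set.Ioo (0:ℝ) α, (h (-(y + t)/2) (g₁ t) + h (-(y - t)/2) (g₂ t)) := by
        rw [hIeq, smul_smul]
        norm_num
      rw [h2]
      exact hQ2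
    · -- x ∈ B
      have hxB : x ∈ Set.Ioo (α/2) α := ⟨lt_of_le_of_ne (not_lt.1 hcut) (Ne.symm hxne), hxI.2⟩
      obtain ⟨hQ1, -, Int3, Int4, -, -⟩ := hQBx hxB
      set y : ℝ := 2*x + -α with hy
      have hFB : IntegrableOn (fun t => h (x - t) (f t)) (Set.Ioo (α/2) α) volume := by
        have c1 : IntegrableOn (fun t => (fun u => h ((y - u)/2) (g₁ u)) (2*t + -α))
            (Set.Ioo (α/2) α) volume :=
          integrableOn_comp_aff hIm Int3 two_ne_zero (-α) hmapsB
        refine c1.congr_fun ?_ hBm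
        intro t htB
        show h ((y - (2*t + -α))/2) (g₁ (2*t + -α)) = h (x - t) (f t)
        rw [hfB t htB, show ((y - (2*t + -α))/2 : ℝ) = x - t by rw [hy]; ring]
      have hFA : IntegrableOn (fun t => h (x - t) (f t)) (Set.Ioo (0:ℝ) (α/2)) volume := by
        have c1 : IntegrableOn (fun t => (fun u => h ((y + u)/2) (g₂ u)) (-2*t + α))
            (Set.Ioo (0:ℝ) (α/2)) volume :=
          integrableOn_comp_aff hIm Int4 (by norm_num : (-2:ℝ) ≠ 0) α hmapsA
        refine c1.congr_fun ?_ hAm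
        intro t htA
        show h ((y + (-2*t + α))/2) (g₂ (-2*t + α)) = h (x - t) (f t)
        rw [hfA t htA, show ((y + (-2*t + α))/2 : ℝ) = x - t by rw [hy]; ring]
      have hF : IntegrableOn (fun t => h (x - t) (f t)) (Set.Ioo (0:ℝ) α) volume := by
        refine ((hFA.union hFB).union (hpt _)).mono_set ?_
        intro z hz
        rcases lt_trichotomy z (α/2) with h1 | h1 | h1
        · exact Or.inl (Or.inl ⟨hz.1, h1⟩)
        · exact Or.inr (by simp [h1])
        · exact Or.inl (Or.inr ⟨h1, hz.2⟩)
      have hIeq : ∫ t in Set.Ioo (0:ℝ) α, (h ((y - t)/2) (g₁ t) + h ((y + t)/2) (g₂ t))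
          = (2:ℝ) • ∫ t in Set.Ioo (0:ℝ) α, h (x - t) (f t) := by
        rw [setIntegral_congr_fun hIm (g := fun t =>
            (fun u => h (x - u) (f u)) ((1/2)*t + α/2) + (fun u => h (x - u) (f u)) (-(1/2)*t + α/2)) ?_]
        · exact half_combine hα hF
        · intro t htI
          show h ((y - t)/2) (g₁ t) + h ((y + t)/2) (g₂ t)
              = h (x - ((1/2)*t + α/2)) (f ((1/2)*t + α/2)) + h (x - (-(1/2)*t + α/2)) (f (-(1/2)*t + α/2))
          have hmB : (1/2)*t + α/2 ∈ Set.Ioo (α/2) α := by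
            constructor <;> nlinarith [htI.1, htI.2]
          have hmA : -(1/2)*t + α/2 ∈ Set.Ioo (0:ℝ) (α/2) := by
            constructor <;> nlinarith [htI.1, htI.2]
          rw [hfB _ hmB, hfA _ hmA,
            show 2*((1/2)*t + α/2) + -α = t by ring,
            show -2*(-(1/2)*t + α/2) + α = t by ring,
            show x - ((1/2)*t + α/2) = (y - t)/2 by rw [hy]; ring,
            show x - (-(1/2)*t + α/2) = (y + t)/2 by rw [hy]; ring]
      have hfx : f x = g₁ y := by rw [hfB x hxB]
      rw [hfx]
      have h2 : ∫ t in Set.Ioo (0:ℝ) α, h (x - t) (f t)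
          = (1/2 : ℝ) • ∫ t in Set.Ioo (0:ℝ) α, (h ((y - t)/2) (g₁ t) + h ((y + t)/2) (g₂ t)) := by
        rw [hIeq, smul_smul]
        norm_num
      rw [h2]
      exact hQ1

/-- Let `h ∈ L¹((-1,1), M_r)` and `α ∈ (0,1]`, and let `F^h` be the
`2r × 2r` block kernel
`F^h(x,t) = (1/2)[[h((x-t)/2), h((x+t)/2)], [h(-(x+t)/2), h(-(x-t)/2)]]`.
The equation `f(x) + ∫₀^α h(x-t) f(t) dt = 0` on `(0,α)` has a nonzero solution
`f ∈ L²((0,α), ℂ^r)` iff `g(x) + ∫₀^α F^h(x,t) g(t) dt = 0` on `(0,α)` has a nonzero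
solution `g = (g₁, g₂)ᵀ ∈ L²((0,α), ℂ^{2r})`. -/
theorem stmt_11 (r : ℕ) (h : ℝ → (En r →L[ℂ] En r))
    (hh : IntegrableOn h (Set.Ioo (-1 : ℝ) 1) volume)
    (α : ℝ) (hα : 0 < α) (hα1 : α ≤ 1) :
    (∃ f : ℝ → En r,
        MemLp f 2 (volume.restrict (Set.Ioo (0 : ℝ) α)) ∧
        ¬ f =ᵐ[volume.restrict (Set.Ioo (0 : ℝ) α)] 0 ∧
        ∀ᵐ x ∂volume.restrict (Set.Ioo (0 : ℝ) α),
          f x + ∫ t in Set.Ioo (0 : ℝ) α, h (x - t) (f t) = 0) ↔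
    (∃ g₁ g₂ : ℝ → En r,
        MemLp g₁ 2 (volume.restrict (Set.Ioo (0 : ℝ) α)) ∧
        MemLp g₂ 2 (volume.restrict (Set.Ioo (0 : ℝ) α)) ∧
        ¬ (g₁ =ᵐ[volume.restrict (Set.Ioo (0 : ℝ) α)] 0 ∧
           g₂ =ᵐ[volume.restrict (Set.Ioo (0 : ℝ) α)] 0) ∧
        ∀ᵐ x ∂volume.restrict (Set.Ioo (0 : ℝ) α),
          g₁ x + (1 / 2 : ℝ) • (∫ t in Set.Ioo (0 : ℝ) α,
              (h ((x - t) / 2) (g₁ t) + h ((x + t) / 2) (g₂ t))) = 0 ∧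
          g₂ x + (1 / 2 : ℝ) • (∫ t in Set.Ioo (0 : ℝ) α,
              (h (-(x + t) / 2) (g₁ t) + h (-(x - t) / 2) (g₂ t))) = 0) := by
  constructor
  · rintro ⟨f, hf2, hfne, hfeq⟩
    exact forward r h hh α hα hα1 f hf2 hfne hfeq
  · rintro ⟨g₁, g₂, hg1, hg2, hgne, hgeq⟩
    exact backward r h hh α hα hα1 g₁ g₂ hg1 hg2 hgne hgeq

end
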